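/- If f₁ : ℝ → ℝ satisfies (f₁')² + f₁² = 1 with f₁ twice differentiable and f₁' never zero on an interval, and f₂ satisfies f₂' = f₂, then z = f₁ + f₂ satisfies the second-order ADE (z'')² − 2 z' z'' + 2 (z')² − 2 z z' + z² − 2 = 0 on that interval. -/

import Mathlib

theorem sum_satisfies_second_order_ade (f₁ f₂ : ℝ → ℝ) (a b : ℝ)
    (hf₁ : ContDiff ℝ 2 f₁) (hf₂ : Differentiable ℝ f₂)
    (h₁ : ∀ x ∈ Set.Ioo a b, (deriv f₁ x) ^ 2 + (f₁ x) ^ 2 = 1)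
    (h₁' : ∀ x ∈ Set.Ioo a b, deriv f₁ x ≠ 0)
    (h₂ : ∀ x ∈ Set.Ioo a b, deriv f₂ x = f₂ x) :
    ∀ x ∈ Set.Ioo a b,
      (deriv (deriv (f₁ + f₂)) x) ^ 2
        - 2 * deriv (f₁ + f₂) x * deriv (deriv (f₁ + f₂)) x
        + 2 * (deriv (f₁ + f₂) x) ^ 2
        - 2 * (f₁ + f₂) x * deriv (f₁ + f₂) x
        + ((f₁ + f₂) x) ^ 2 - 2 = 0 := by
  intro x hx
  have hmem : Set.Ioo a b ∈ nhds x := (isOpen_Ioo).mem_nhds hx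
  have hf₁d : Differentiable ℝ f₁ := hf₁.differentiable (by norm_num)
  have hc : ContDiff ℝ 1 (deriv f₁) := by
    have h2 : ContDiff ℝ ((1:ℕ∞)+1) f₁ := by exact_mod_cast hf₁
    exact (contDiff_succ_iff_deriv.mp h2).2.2
  have hf₁'d : Differentiable ℝ (deriv f₁) := hc.differentiable one_ne_zero
  -- deriv f₂ agrees with f₂ near x
  have heq : deriv f₂ =ᶠ[nhds x] f₂ := by
    filter_upwards [hmem] with y hy using h₂ y hy
  have hf₂'dx : DifferentiableAt ℝ (deriv f₂) x := (hf₂ x).congr_of_eventuallyEq heq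
  have hd₂₂ : deriv (deriv f₂) x = f₂ x := by rw [heq.deriv_eq]; exact h₂ x hx
  -- second derivative of f₁ is -f₁ on the interval
  have hgc : (fun y => (deriv f₁ y) ^ 2 + (f₁ y) ^ 2) =ᶠ[nhds x] (fun _ => (1:ℝ)) := by
    filter_upwards [hmem] with y hy using h₁ y hy
  have hgd : HasDerivAt (fun y => (deriv f₁ y) ^ 2 + (f₁ y) ^ 2)
      (2 * deriv f₁ x ^ 1 * deriv (deriv f₁) x + 2 * f₁ x ^ 1 * deriv f₁ x) x := by
    exact (((hf₁'d x).hasDerivAt.pow 2).add ((hf₁d x).hasDerivAt.pow 2))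
  have hzero : 2 * deriv f₁ x ^ 1 * deriv (deriv f₁) x + 2 * f₁ x ^ 1 * deriv f₁ x = 0 := by
    rw [← hgd.deriv, hgc.deriv_eq]; simp
  have hd₁₂ : deriv (deriv f₁) x = - f₁ x := by
    have hne := h₁' x hx
    have h3 : deriv f₁ x * (deriv (deriv f₁) x + f₁ x) = 0 := by ring_nf; ring_nf at hzero; linarith
    have := (mul_eq_zero.mp h3).resolve_left hne
    linarith
  -- derivatives of the sum
  have hsum : deriv (f₁ + f₂) = fun y => deriv f₁ y + deriv f₂ y := by
    funext y
    exact deriv_add (hf₁d y) (hf₂ y)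
  have hz' : deriv (f₁ + f₂) x = deriv f₁ x + f₂ x := by
    rw [hsum]; dsimp only; rw [h₂ x hx]
  have hz'' : deriv (deriv (f₁ + f₂)) x = - f₁ x + f₂ x := by
    rw [hsum, deriv_fun_add (hf₁'d x) hf₂'dx, hd₁₂, hd₂₂]
  have hzx : (f₁ + f₂) x = f₁ x + f₂ x := rfl
  rw [hz', hz'', hzx]
  have := h₁ x hx
  nlinarith [this]
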